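/- Let 𝒜 be a trim ℕ-automaton without heavy cycles, and for i ≥ 0 let S_i be the set of states of height i in its barbell graph 𝔊. If q ∈ S_i and μ(w)(q,q') ≥ 1 for some word w ∈ A*, then q' ∈ S_j for some j ≥ i. -/
import Mathlib


set_option autoImplicit false

/-! ### Asymptotic growth of functions `A* → ℕ` -/

/-- `g` has `k`-polynomial growth: `g(w) = O(|w|^k)` and there is an infinite set `L`
of words on which `g(w) = Ω(|w|^k)`. -/
def PolyGrowth {A : Type} (g : List A → ℕ) (k : ℕ) : Prop :=
  (∃ C : ℕ, ∀ w, g w ≤ C * w.length ^ k + C) ∧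
  (∃ L : Set (List A), L.Infinite ∧ ∃ c : ℕ, 0 < c ∧ ∀ w ∈ L, w.length ^ k ≤ c * g w)

/-- `g` has exponential growth: `g(w) = 2^{O(|w|)}` and there is an infinite set `L`
of words on which `g(w) = 2^{Ω(|w|)}`. -/
def ExpGrowth {A : Type} (g : List A → ℕ) : Prop :=
  (∃ C : ℕ, ∀ w, g w ≤ 2 ^ (C * w.length + C)) ∧
  (∃ L : Set (List A), L.Infinite ∧ ∃ c : ℕ, 0 < c ∧ ∀ w ∈ L, 2 ^ w.length ≤ (g w) ^ c)

/-! ### Substitutions -/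

/-- Extension of a substitution `s : X → (B ⊎ X)*` to a morphism on `(B ⊎ X)*`
fixing the letters of `B`; this also gives the composition of substitutions,
`(s₁ ∘ s₂) x = applySubst s₁ (s₂ x)`. -/
def applySubst {B X : Type} (s : X → List (B ⊕ X)) (l : List (B ⊕ X)) : List (B ⊕ X) :=
  l.flatMap (fun c => match c with | Sum.inl b => [Sum.inl b] | Sum.inr x => s x)

/-- Evaluation of a word over `B ⊎ X` under a valuation `v : X → B*` of the registers. -/
def evalSubst {B X : Type} (v : X → List B) (l : List (B ⊕ X)) : List B :=
  l.flatMap (fun c => match c with | Sum.inl b => [b] | Sum.inr x => v x)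

/-- Number of occurrences of register `x` in a word over `B ⊎ X`. -/
noncomputable def occCount {B X : Type} (x : X) (l : List (B ⊕ X)) : ℕ :=
  l.countP (fun c => @decide (c = Sum.inr x) (Classical.propDecidable _))

/-- Total number of occurrences of register `x` in the whole set of words `{s y | y ∈ X}`. -/
noncomputable def totalOcc {B X : Type} [Fintype X] (s : X → List (B ⊕ X)) (x : X) : ℕ :=
  ∑ y : X, occCount x (s y)

/-! ### Streaming string transducers -/

/-- A streaming string transducer (SST) with input alphabet `A` and output alphabet `B`:
finitely many states `Q` with initial state `q0`, finitely many registers `X` with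
initial contents `init`, a partial transition/update function (`trans`, returning the
successor state together with the register update substitution, with a common domain),
and a partial output function `out`. -/
structure SST (A B : Type) where
  Q : Type
  X : Type
  [finQ : Fintype Q]
  [finX : Fintype X]
  q0 : Q
  init : X → List B
  trans : Q → A → Option (Q × (X → List (B ⊕ X)))
  out : Q → Option (List (B ⊕ X))

attribute [instance] SST.finQ SST.finX

/-- Run of an SST from state `q` with current register valuation `v`. -/
def SST.runFrom {A B : Type} (T : SST A B) :
    T.Q → (T.X → List B) → List A → Option (T.Q × (T.X → List B))
  | q, v, [] => some (q, v)
  | q, v, a :: w =>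
    match T.trans q a with
    | none => none
    | some (q', s) => T.runFrom q' (fun x => evalSubst v (s x)) w

/-- The (partial) function computed by an SST. -/
def SST.eval {A B : Type} (T : SST A B) (w : List A) : Option (List B) :=
  (T.runFrom T.q0 T.init w).bind fun p => (T.out p.1).map fun o => evalSubst p.2 o

def SST.Computes {A B : Type} (T : SST A B) (f : List A → Option (List B)) : Prop :=
  ∀ w, T.eval w = f w

/-- An SST is copyless if every update substitution uses each register at most once
in total. -/
def SST.Copyless {A B : Type} (T : SST A B) : Prop :=
  ∀ q a p, T.trans q a = some p → ∀ x : T.X, totalOcc p.2 x ≤ 1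

/-- An SST is `k`-layered if its registers can be partitioned into layers
`X_0, …, X_k` such that every update of a register of layer `i` only uses registers
of layers `≤ i`, and each register of layer `i` is used at most once in total in the
updates of the registers of layer `i`. -/
def SST.IsLayered {A B : Type} (T : SST A B) (k : ℕ) : Prop :=
  ∃ layer : T.X → Fin (k + 1),
    ∀ q a p, T.trans q a = some p →
      (∀ x y, Sum.inr y ∈ p.2 x → layer y ≤ layer x) ∧
      (∀ y : T.X,
        (∑ x ∈ Finset.univ.filter (fun x => layer x = layer y), occCount y (p.2 x)) ≤ 1)

/-- The composed substitution `λ(q, w)` applied along the run reading `w` from state `q`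
(together with the state reached). -/
def SST.substFrom {A B : Type} (T : SST A B) :
    T.Q → List A → Option (T.Q × (T.X → List (B ⊕ T.X)))
  | q, [] => some (q, fun x => [Sum.inr x])
  | q, a :: w =>
    match T.trans q a with
    | none => none
    | some (q', s) => (T.substFrom q' w).map fun p => (p.1, fun x => applySubst s (p.2 x))

/-- An SST is `(k,B)`-bounded if its registers can be partitioned into layers
`X_0, …, X_k` such that every update of a register of layer `i` only uses registers of
layers `≤ i`, and for every state `q` and word `w`, each register of layer `i` occurs
at most `B` times in total in `{λ(q,w)(x) | x ∈ X_i}`. -/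
def SST.IsBounded {A B : Type} (T : SST A B) (k Bd : ℕ) : Prop :=
  ∃ layer : T.X → Fin (k + 1),
    (∀ q a p, T.trans q a = some p → ∀ x y, Sum.inr y ∈ p.2 x → layer y ≤ layer x) ∧
    (∀ q w p, T.substFrom q w = some p →
      ∀ y : T.X,
        (∑ x ∈ Finset.univ.filter (fun x => layer x = layer y), occCount y (p.2 x)) ≤ Bd)

/-! ### Simple SSTs -/

/-- A simple SST: total, a single state (hence no state component), and update
substitutions and output using no letters of `B`. -/
structure SimpleSST (A B : Type) where
  X : Type
  [finX : Fintype X]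
  [decX : DecidableEq X]
  init : X → List B
  upd : A → X → List X
  out : List X

attribute [instance] SimpleSST.finX SimpleSST.decX

/-- Register valuation of a simple SST after reading a word, starting from valuation `v`. -/
def SimpleSST.valFrom {A B : Type} (T : SimpleSST A B) :
    (T.X → List B) → List A → T.X → List B
  | v, [] => v
  | v, a :: w => T.valFrom (fun x => (T.upd a x).flatMap v) w

/-- Register valuation `𝒯^w` of a simple SST after reading `w`. -/
def SimpleSST.val {A B : Type} (T : SimpleSST A B) (w : List A) : T.X → List B :=
  T.valFrom T.init w

/-- The (total) function computed by a simple SST. -/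
def SimpleSST.eval {A B : Type} (T : SimpleSST A B) (w : List A) : List B :=
  (T.out).flatMap (T.val w)

/-! ### Two-way transducers -/

/-- A tape symbol: a letter of `A` or one of the two endmarkers `⊢`, `⊣`. -/
inductive TapeSym (A : Type) where
  | lend
  | rend
  | letter (a : A)

/-- The content of the tape `⊢w⊣` at position `m ∈ {0, …, |w|+1}`. -/
def tapeAt {A : Type} (w : List A) (m : ℕ) : TapeSym A :=
  if m = 0 then TapeSym.lend
  else
    match w[m - 1]? with
    | some a => TapeSym.letter a
    | none => TapeSym.rend

/-- Head moves. -/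
inductive Dir where
  | left
  | right

/-- A deterministic two-way transducer: finitely many states with an initial state and
a set of final states, and a partial transition/output function (common domain). -/
structure TwoWayT (A B : Type) where
  Q : Type
  [finQ : Fintype Q]
  q0 : Q
  final : Set Q
  trans : Q → TapeSym A → Option ((Q × Dir) × List B)

attribute [instance] TwoWayT.finQ

/-- `TwoWayT.Steps T w c v c'`: on input `⊢w⊣` the transducer can go from
configuration `c` to configuration `c'` producing output `v`. -/
inductive TwoWayT.Steps {A B : Type} (T : TwoWayT A B) (w : List A) :
    T.Q × ℕ → List B → T.Q × ℕ → Prop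
  | refl (c : T.Q × ℕ) : TwoWayT.Steps T w c [] c
  | stepL {q : T.Q} {m : ℕ} {q' : T.Q} {v u : List B} {cf : T.Q × ℕ} :
      T.trans q (tapeAt w m) = some ((q', Dir.left), v) → 1 ≤ m →
      TwoWayT.Steps T w (q', m - 1) u cf → TwoWayT.Steps T w (q, m) (v ++ u) cf
  | stepR {q : T.Q} {m : ℕ} {q' : T.Q} {v u : List B} {cf : T.Q × ℕ} :
      T.trans q (tapeAt w m) = some ((q', Dir.right), v) → m ≤ w.length →
      TwoWayT.Steps T w (q', m + 1) u cf → TwoWayT.Steps T w (q, m) (v ++ u) cf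

/-- The two-way transducer computes the partial function `f`: `f w = some v` iff there
is an accepting run on `⊢w⊣` (from `(q0, 0)` to `(q, |w|+1)` with `q` final)
producing `v`. -/
def TwoWayT.Computes {A B : Type} (T : TwoWayT A B) (f : List A → Option (List B)) : Prop :=
  ∀ w v, f w = some v ↔ ∃ q ∈ T.final, TwoWayT.Steps T w (T.q0, 0) v (q, w.length + 1)

/-! ### Marble transducers -/

/-- Actions of a marble transducer: move left, move right, lift the marble, or drop a
marble of color `c`. -/
inductive MAct (C : Type) where
  | left
  | right
  | lift
  | drop (c : C)

/-- A deterministic marble transducer: finitely many states with an initial state and a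
set of final states, finitely many marble colors `C`, and a partial transition/output
function (common domain) reading the current state, the tape symbol, and the color of
the marble at the current position (if any); on a position carrying a marble the head
may only move left or lift the marble. -/
structure MarbleT (A B : Type) where
  Q : Type
  C : Type
  [finQ : Fintype Q]
  [finC : Fintype C]
  q0 : Q
  final : Set Q
  trans : Q → TapeSym A → Option C → Option ((Q × MAct C) × List B)
  marble_left_or_lift : ∀ q s c p, trans q s (some c) = some p →
    p.1.2 = MAct.left ∨ p.1.2 = MAct.lift

attribute [instance] MarbleT.finQ MarbleT.finC

/-- The color of the marble at position `m`, for a stack `π` of dropped marbles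
(topmost first, positions strictly increasing from the top and all ≥ the head
position). -/
def marbleAt {C : Type} (m : ℕ) : List (C × ℕ) → Option C
  | [] => none
  | (c, p) :: _ => if p = m then some c else none

/-- `MarbleT.Steps T w c v c'`: on input `⊢w⊣` the marble transducer can go from
configuration `c` to configuration `c'` producing output `v`. A configuration is a
triple (state, head position, stack of dropped marbles). -/
inductive MarbleT.Steps {A B : Type} (T : MarbleT A B) (w : List A) :
    T.Q × ℕ × List (T.C × ℕ) → List B → T.Q × ℕ × List (T.C × ℕ) → Prop
  | refl (c : T.Q × ℕ × List (T.C × ℕ)) : MarbleT.Steps T w c [] c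
  | stepL {q : T.Q} {m : ℕ} {π : List (T.C × ℕ)} {q' : T.Q} {v u : List B}
      {cf : T.Q × ℕ × List (T.C × ℕ)} :
      T.trans q (tapeAt w m) (marbleAt m π) = some ((q', MAct.left), v) → 1 ≤ m →
      MarbleT.Steps T w (q', m - 1, π) u cf → MarbleT.Steps T w (q, m, π) (v ++ u) cf
  | stepR {q : T.Q} {m : ℕ} {π : List (T.C × ℕ)} {q' : T.Q} {v u : List B}
      {cf : T.Q × ℕ × List (T.C × ℕ)} :
      marbleAt m π = none →
      T.trans q (tapeAt w m) none = some ((q', MAct.right), v) → m ≤ w.length →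
      MarbleT.Steps T w (q', m + 1, π) u cf → MarbleT.Steps T w (q, m, π) (v ++ u) cf
  | stepLift {q : T.Q} {m : ℕ} {π : List (T.C × ℕ)} {q' : T.Q} {cc : T.C} {v u : List B}
      {cf : T.Q × ℕ × List (T.C × ℕ)} :
      T.trans q (tapeAt w m) (some cc) = some ((q', MAct.lift), v) →
      MarbleT.Steps T w (q', m, π) u cf →
      MarbleT.Steps T w (q, m, (cc, m) :: π) (v ++ u) cf
  | stepDrop {q : T.Q} {m : ℕ} {π : List (T.C × ℕ)} {q' : T.Q} {cc : T.C} {v u : List B}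
      {cf : T.Q × ℕ × List (T.C × ℕ)} :
      marbleAt m π = none →
      T.trans q (tapeAt w m) none = some ((q', MAct.drop cc), v) →
      MarbleT.Steps T w (q', m, (cc, m) :: π) u cf →
      MarbleT.Steps T w (q, m, π) (v ++ u) cf

/-- The marble transducer computes the partial function `f`: `f w = some v` iff there is
an accepting run on `⊢w⊣` (from `(q0, 0, ε)` to `(q, |w|+1, ε)` with `q` final)
producing `v`. -/
def MarbleT.Computes {A B : Type} (T : MarbleT A B) (f : List A → Option (List B)) : Prop :=
  ∀ w v, f w = some v ↔
    ∃ q ∈ T.final, MarbleT.Steps T w (T.q0, 0, []) v (q, w.length + 1, [])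

/-- A `k`-marble transducer: every configuration reachable from the initial
configuration carries at most `k` marbles. -/
def MarbleT.IsKMarble {A B : Type} (T : MarbleT A B) (k : ℕ) : Prop :=
  ∀ (w : List A) (u : List B) (cfg : T.Q × ℕ × List (T.C × ℕ)),
    MarbleT.Steps T w (T.q0, 0, []) u cfg → cfg.2.2.length ≤ k

/-- `f` is computable by a `k`-marble transducer. -/
def ComputableKMarble {A B : Type} (f : List A → List B) (k : ℕ) : Prop :=
  ∃ T : MarbleT A B, T.IsKMarble k ∧ T.Computes (fun w => some (f w))

/-! ### Matrices over ℕ and ℕ-automata -/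

/-- Product of two square matrices over `ℕ` (given as functions). -/
def matMul {Q : Type} [Fintype Q] (M N : Q → Q → ℕ) : Q → Q → ℕ :=
  fun i j => ∑ x : Q, M i x * N x j

/-- Identity matrix over `ℕ`. -/
def matId {Q : Type} [DecidableEq Q] : Q → Q → ℕ :=
  fun i j => if i = j then 1 else 0

/-- Row vector times matrix. -/
def vecMat {Q : Type} [Fintype Q] (v : Q → ℕ) (M : Q → Q → ℕ) : Q → ℕ :=
  fun j => ∑ x : Q, v x * M x j

/-- Matrix times column vector. -/
def matVec {Q : Type} [Fintype Q] (M : Q → Q → ℕ) (v : Q → ℕ) : Q → ℕ :=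
  fun i => ∑ x : Q, M i x * v x

/-- Dot product of two vectors over `ℕ`. -/
def dotProd {Q : Type} [Fintype Q] (v w : Q → ℕ) : ℕ :=
  ∑ x : Q, v x * w x

/-- An `ℕ`-automaton: a finite set of states `Q`, an initial row vector `α`, a weight
matrix `μ a` for every letter `a` (extended to words as a monoid morphism `μW`), and a
final column vector `β`. -/
structure NAut (A : Type) where
  Q : Type
  [finQ : Fintype Q]
  [decQ : DecidableEq Q]
  α : Q → ℕ
  μ : A → Q → Q → ℕ
  β : Q → ℕ

attribute [instance] NAut.finQ NAut.decQ

/-- The monoid morphism `A* → ℕ^{Q×Q}` extending `μ`. -/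
def NAut.μW {A : Type} (T : NAut A) : List A → T.Q → T.Q → ℕ
  | [] => matId
  | a :: w => matMul (T.μ a) (T.μW w)

/-- The total function `g : A* → ℕ` computed by the `ℕ`-automaton: `g w = α·μ(w)·β`. -/
def NAut.g {A : Type} (T : NAut A) (w : List A) : ℕ :=
  dotProd (vecMat T.α (T.μW w)) T.β

/-- Trimness: every state is accessible and co-accessible with nonzero weight. -/
def NAut.Trim {A : Type} (T : NAut A) : Prop :=
  ∀ q : T.Q, (∃ u, 1 ≤ vecMat T.α (T.μW u) q) ∧ (∃ v, 1 ≤ matVec (T.μW v) T.β q)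

/-- A heavy cycle on state `q`: a nonempty word `v` with `μ(v)(q,q) ≥ 2`. -/
def NAut.HeavyCycle {A : Type} (T : NAut A) (q : T.Q) (v : List A) : Prop :=
  v ≠ [] ∧ 2 ≤ T.μW v q q

/-- A barbell from `q` to `q' ≠ q`: a nonempty word `v` with `μ(v)(q,q) ≥ 1`,
`μ(v)(q,q') ≥ 1` and `μ(v)(q',q') ≥ 1`. -/
def NAut.Barbell {A : Type} (T : NAut A) (q q' : T.Q) (v : List A) : Prop :=
  q ≠ q' ∧ v ≠ [] ∧ 1 ≤ T.μW v q q ∧ 1 ≤ T.μW v q q' ∧ 1 ≤ T.μW v q' q'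

/-- Edge of the barbell graph `𝔊`. -/
def NAut.GEdge {A : Type} (T : NAut A) (q1 q2 : T.Q) : Prop :=
  ∃ q q' v, T.Barbell q q' v ∧ (∃ w, 1 ≤ T.μW w q1 q) ∧ (∃ w', 1 ≤ T.μW w' q' q2)

/-- `PathLen G q n`: there is a directed path of length `n` (counting edges) in the
graph `G` ending in `q`. -/
inductive PathLen {Q : Type} (G : Q → Q → Prop) : Q → ℕ → Prop
  | zero (q : Q) : PathLen G q 0
  | succ {p q : Q} {n : ℕ} : PathLen G p n → G p q → PathLen G q (n + 1)

/-- The height of `q` in the graph `G` is `n`: the maximal length of a directed path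
ending in `q` is `n`. -/
def HeightIs {Q : Type} (G : Q → Q → Prop) (q : Q) (n : ℕ) : Prop :=
  PathLen G q n ∧ ∀ m, PathLen G q m → m ≤ n

/-! ### Statement-specific predicates -/

/-- Case (1) of the trichotomy: `|f|` has exponential growth and `f` is not computable
with `k` marbles for any `k`. -/
def MarbleCase1 {A B : Type} (f : List A → List B) : Prop :=
  ExpGrowth (fun w => (f w).length) ∧ ∀ k : ℕ, ¬ ComputableKMarble f k

/-- Case (2) of the trichotomy: `|f|` has `(k+1)`-polynomial growth for some `k`, `f` is
computable with `k` marbles, and `k` is the least possible number of marbles. -/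
def MarbleCase2 {A B : Type} (f : List A → List B) : Prop :=
  ∃ k : ℕ, PolyGrowth (fun w => (f w).length) (k + 1) ∧ ComputableKMarble f k ∧
    ∀ j : ℕ, ComputableKMarble f j → k ≤ j

/-- Case (3) of the trichotomy: `|f|` has `0`-polynomial growth and `f` is computable
with `0` marbles. -/
def MarbleCase3 {A B : Type} (f : List A → List B) : Prop :=
  PolyGrowth (fun w => (f w).length) 0 ∧ ComputableKMarble f 0

/-- The second alternative of Lemma `lem:graph`: `g` has `k`-polynomial growth for some
`k ≥ 0` and the states admit a partition `S_0, …, S_k` satisfying (a), (b), (c). -/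
def NAutPolyCase {A : Type} (T : NAut A) : Prop :=
  ∃ k : ℕ, PolyGrowth T.g k ∧
    ∃ S : T.Q → Fin (k + 1),
      (∀ q q' : T.Q, (∃ w, 1 ≤ T.μW w q q') → S q ≤ S q') ∧
      (∃ Bd : ℕ, ∀ q q' : T.Q, S q = S q' → ∀ w, T.μW w q q' ≤ Bd) ∧
      (∀ q : T.Q, ∃ C : ℕ, ∀ w, vecMat T.α (T.μW w) q ≤ C * w.length ^ (S q : ℕ) + C)

section Aux

lemma matId_matMul {Q : Type} [Fintype Q] [DecidableEq Q] (M : Q → Q → ℕ) :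
    matMul matId M = M := by
  funext i j
  simp [matMul, matId, ite_mul, Finset.sum_ite_eq]

lemma matMul_assoc {Q : Type} [Fintype Q] (M N P : Q → Q → ℕ) :
    matMul (matMul M N) P = matMul M (matMul N P) := by
  funext i j
  simp only [matMul, Finset.sum_mul, Finset.mul_sum]
  rw [Finset.sum_comm]
  exact Finset.sum_congr rfl fun x _ => Finset.sum_congr rfl fun y _ => by ring

lemma μW_append {A : Type} (T : NAut A) (u v : List A) :
    T.μW (u ++ v) = matMul (T.μW u) (T.μW v) := by
  induction u with
  | nil => simp [NAut.μW, matId_matMul]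
  | cons a u ih =>
    show T.μW (a :: (u ++ v)) = _
    rw [show T.μW (a :: (u ++ v)) = matMul (T.μ a) (T.μW (u ++ v)) from rfl, ih,
      show T.μW (a :: u) = matMul (T.μ a) (T.μW u) from rfl, matMul_assoc]

lemma le_matMul {Q : Type} [Fintype Q] (M N : Q → Q → ℕ) (q r s : Q) :
    M q r * N r s ≤ matMul M N q s := by
  exact Finset.single_le_sum (f := fun x => M q x * N x s)
    (fun x _ => Nat.zero_le _) (Finset.mem_univ r)

lemma le_μW_append {A : Type} (T : NAut A) (u v : List A) (q r s : T.Q) :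
    T.μW u q r * T.μW v r s ≤ T.μW (u ++ v) q s := by
  rw [μW_append]; exact le_matMul _ _ q r s

lemma one_le_μW_append {A : Type} (T : NAut A) {u v : List A} {q r s : T.Q}
    (h1 : 1 ≤ T.μW u q r) (h2 : 1 ≤ T.μW v r s) : 1 ≤ T.μW (u ++ v) q s :=
  le_trans (by calc 1 = 1 * 1 := rfl
                   _ ≤ T.μW u q r * T.μW v r s := Nat.mul_le_mul h1 h2)
    (le_μW_append T u v q r s)

lemma barbell_double {A : Type} (T : NAut A) {q q' : T.Q} {v : List A}
    (hb : T.Barbell q q' v) : 2 ≤ T.μW (v ++ v) q q' := by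
  obtain ⟨hne, -, h1, h2, h3⟩ := hb
  have key : T.μW v q q * T.μW v q q' + T.μW v q q' * T.μW v q' q' ≤
      T.μW (v ++ v) q q' := by
    rw [μW_append]
    have hsub : ({q, q'} : Finset T.Q) ⊆ Finset.univ := Finset.subset_univ _
    calc T.μW v q q * T.μW v q q' + T.μW v q q' * T.μW v q' q'
        = ∑ x ∈ ({q, q'} : Finset T.Q), T.μW v q x * T.μW v x q' := by
          rw [Finset.sum_pair hne]
      _ ≤ ∑ x : T.Q, T.μW v q x * T.μW v x q' :=
          Finset.sum_le_sum_of_subset_of_nonneg hsub (fun _ _ _ => Nat.zero_le _)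
      _ = matMul (T.μW v) (T.μW v) q q' := rfl
  calc (2 : ℕ) = 1 * 1 + 1 * 1 := rfl
    _ ≤ T.μW v q q * T.μW v q q' + T.μW v q q' * T.μW v q' q' :=
        Nat.add_le_add (Nat.mul_le_mul h1 h2) (Nat.mul_le_mul h2 h3)
    _ ≤ _ := key

lemma gedge_trans {A : Type} (T : NAut A) : Transitive T.GEdge := by
  rintro a b c ⟨q, q', v, hb, ⟨w1, hw1⟩, ⟨w1', hw1'⟩⟩ ⟨r, r', v2, hb2, ⟨x, hx⟩, ⟨x', hx'⟩⟩
  refine ⟨r, r', v2, hb2, ⟨w1 ++ (v ++ (w1' ++ x)), ?_⟩, ⟨x', hx'⟩⟩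
  exact one_le_μW_append T hw1
    (one_le_μW_append T hb.2.2.2.1 (one_le_μW_append T hw1' hx))

lemma gedge_irrefl {A : Type} (T : NAut A)
    (h : ¬ ∃ q v, T.HeavyCycle q v) (q1 : T.Q) : ¬ T.GEdge q1 q1 := by
  rintro ⟨q, q', v, hb, ⟨w, hw⟩, ⟨w', hw'⟩⟩
  apply h
  refine ⟨q1, w ++ ((v ++ v) ++ w'), ?_, ?_⟩
  · simp [hb.2.1]
  · have h2 : 2 ≤ T.μW ((v ++ v) ++ w') q q1 := by
      calc (2 : ℕ) = 2 * 1 := rfl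
        _ ≤ T.μW (v ++ v) q q' * T.μW w' q' q1 :=
            Nat.mul_le_mul (barbell_double T hb) hw'
        _ ≤ _ := le_μW_append T _ _ q q' q1
    calc (2 : ℕ) = 1 * 2 := rfl
      _ ≤ T.μW w q1 q * T.μW ((v ++ v) ++ w') q q1 := Nat.mul_le_mul hw h2
      _ ≤ _ := le_μW_append T _ _ q1 q q1

lemma gedge_transfer {A : Type} (T : NAut A) {p q q' : T.Q} {w : List A}
    (he : T.GEdge p q) (hw : 1 ≤ T.μW w q q') : T.GEdge p q' := by
  obtain ⟨r, r', v, hb, hacc, ⟨w1', hw1'⟩⟩ := he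
  exact ⟨r, r', v, hb, hacc, ⟨w1' ++ w, one_le_μW_append T hw1' hw⟩⟩

lemma pathLen_transfer {A : Type} (T : NAut A) {q q' : T.Q} {n : ℕ} {w : List A}
    (hp : PathLen T.GEdge q n) (hw : 1 ≤ T.μW w q q') : PathLen T.GEdge q' n := by
  cases hp with
  | zero => exact PathLen.zero q'
  | succ hp' he => exact PathLen.succ hp' (gedge_transfer T he hw)

lemma pathLen_list {Q : Type} (G : Q → Q → Prop) (htr : Transitive G)
    (hirr : ∀ q, ¬ G q q) {q : Q} {n : ℕ} (hp : PathLen G q n) :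
    ∃ l : List Q, l.length = n ∧ l.Nodup ∧ ∀ p ∈ l, G p q := by
  induction hp with
  | zero => exact ⟨[], rfl, List.nodup_nil, by simp⟩
  | @succ p q n hp he ih =>
    obtain ⟨l, hlen, hnd, hall⟩ := ih
    refine ⟨p :: l, by simp [hlen], ?_, ?_⟩
    · refine List.nodup_cons.2 ⟨fun hmem => hirr p (hall p hmem), hnd⟩
    · intro x hx
      rcases List.mem_cons.1 hx with rfl | hx
      · exact he
      · exact htr (hall x hx) he

lemma pathLen_bound {Q : Type} [Fintype Q] (G : Q → Q → Prop) (htr : Transitive G)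
    (hirr : ∀ q, ¬ G q q) {q : Q} {n : ℕ} (hp : PathLen G q n) :
    n ≤ Fintype.card Q := by
  obtain ⟨l, hlen, hnd, -⟩ := pathLen_list G htr hirr hp
  exact hlen ▸ hnd.length_le_card

lemma height_exists {Q : Type} [Fintype Q] (G : Q → Q → Prop) (htr : Transitive G)
    (hirr : ∀ q, ¬ G q q) (q : Q) {n : ℕ} (hp : PathLen G q n) :
    ∃ j, n ≤ j ∧ HeightIs G q j := by
  classical
  refine ⟨Nat.findGreatest (PathLen G q) (Fintype.card Q), ?_, ?_, ?_⟩
  · exact Nat.le_findGreatest (pathLen_bound G htr hirr hp) hp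
  · exact Nat.findGreatest_spec (Nat.zero_le _) (PathLen.zero q)
  · intro m hm
    exact Nat.le_findGreatest (pathLen_bound G htr hirr hm) hm

end Aux

theorem stmt12 {A : Type} [Fintype A] (T : NAut A) (hT : T.Trim)
    (h : ¬ ∃ q v, T.HeavyCycle q v) (i : ℕ) (q q' : T.Q)
    (hq : HeightIs T.GEdge q i) (w : List A) (hw : 1 ≤ T.μW w q q') :
    ∃ j, i ≤ j ∧ HeightIs T.GEdge q' j := by
  have hp : PathLen T.GEdge q' i := pathLen_transfer T hq.1 hw
  exact height_exists T.GEdge (gedge_trans T) (gedge_irrefl T h) q' hp
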